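/- The term rewrite system R = { f(g(x)) → g(f(f(x))), f(h(x)) → h(h(f(x))) } over the signature {f, g, h} of unary symbols is terminating: its rewrite relation →_R is well-founded. -/
import Mathlib


/-- First-order terms over a signature `F` with arity function `ar` and variables `V`. -/
inductive Term (F : Type) (ar : F → ℕ) (V : Type) : Type where
  | var : V → Term F ar V
  | app : (f : F) → (Fin (ar f) → Term F ar V) → Term F ar V

namespace Term

variable {F V : Type} {ar : F → ℕ}

/-- Application of a substitution `σ : V → Term F ar V` to a term. -/
def subst (σ : V → Term F ar V) : Term F ar V → Term F ar V
  | var v => σ v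
  | app f args => app f (fun i => (args i).subst σ)

/-- Interpretation of a term in an `F`-algebra with carrier `A` under assignment `α`. -/
def eval {A : Type} (I : (f : F) → (Fin (ar f) → A) → A) (α : V → A) :
    Term F ar V → A
  | var v => α v
  | app f args => I f (fun i => (args i).eval I α)

/-- A term is a non-variable term (function application). -/
def IsApp : Term F ar V → Prop
  | var _ => False
  | app _ _ => True

end Term

section Algebra

variable {F V A : Type}

/-- `RC lt a b` : reflexive closure of the strict order `lt`, i.e. `a ≤ b`. -/
def RC (lt : A → A → Prop) (a b : A) : Prop := lt a b ∨ a = b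

variable (ar : F → ℕ) (I : (f : F) → (Fin (ar f) → A) → A) (lt : A → A → Prop)

/-- `s >_A t` : `[α](t) < [α](s)` for every assignment `α`. -/
def GTA (s t : Term F ar V) : Prop := ∀ α : V → A, lt (t.eval I α) (s.eval I α)

/-- `s ≥_A t` : `[α](t) ≤ [α](s)` for every assignment `α`. -/
def GEA (s t : Term F ar V) : Prop := ∀ α : V → A, RC lt (t.eval I α) (s.eval I α)

/-- The algebra is simple: `f_A(a_1, …, a_n) ≥ a_i`. -/
def Simple : Prop := ∀ (f : F) (as : Fin (ar f) → A) (i : Fin (ar f)), RC lt (as i) (I f as)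

/-- The algebra is weakly monotone: `a_i > b` implies
`f_A(a_1,…,a_i,…,a_n) ≥ f_A(a_1,…,b,…,a_n)`. -/
def WeaklyMonotone : Prop :=
  ∀ (f : F) (as : Fin (ar f) → A) (i : Fin (ar f)) (b : A),
    lt b (as i) → RC lt (I f (Function.update as i b)) (I f as)

end Algebra

section WPO

variable {F V A : Type} (ar : F → ℕ) (I : (f : F) → (Fin (ar f) → A) → A)
  (lt : A → A → Prop) (prec : F → F → Prop)

mutual
  /-- The weighted path order induced by the algebra `(A, I, lt)` and the precedence `prec`. -/
  inductive WPO : Term F ar V → Term F ar V → Prop where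
    /-- (1) `s >_A t`. -/
    | alg {s t} : GTA ar I lt s t → WPO s t
    /-- (2a) `s ≥_A t` and `s_i >_wpo t`. -/
    | sub {f ss t} (i : Fin (ar f)) :
        GEA ar I lt (Term.app f ss) t → WPO (ss i) t → WPO (Term.app f ss) t
    /-- (2a) `s ≥_A t` and `s_i = t`. -/
    | subEq {f ss t} (i : Fin (ar f)) :
        GEA ar I lt (Term.app f ss) t → ss i = t → WPO (Term.app f ss) t
    /-- (2b-i) `s ≥_A t`, `s >_wpo t_j` for all `j`, and `f ≻ g`. -/
    | prc {f ss g ts} :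
        GEA ar I lt (Term.app f ss) (Term.app g ts) →
        (∀ j, WPO (Term.app f ss) (ts j)) →
        prec f g → ¬ prec g f → WPO (Term.app f ss) (Term.app g ts)
    /-- (2b-ii) `s ≥_A t`, `s >_wpo t_j` for all `j`, `f ≿ g` and lex comparison of arguments. -/
    | lex {f ss g ts} :
        GEA ar I lt (Term.app f ss) (Term.app g ts) →
        (∀ j, WPO (Term.app f ss) (ts j)) →
        prec f g → WPOLex (List.ofFn ss) (List.ofFn ts) →
        WPO (Term.app f ss) (Term.app g ts)

  /-- Lexicographic extension of `WPO` to argument lists (of possibly different lengths). -/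
  inductive WPOLex : List (Term F ar V) → List (Term F ar V) → Prop where
    | head {s t l₁ l₂} : WPO s t → WPOLex (s :: l₁) (t :: l₂)
    | tail {s l₁ l₂} : WPOLex l₁ l₂ → WPOLex (s :: l₁) (s :: l₂)
    | longer {s l₁} : WPOLex (s :: l₁) []
end

end WPO

section SPO

variable {F V : Type} {ar : F → ℕ} (qge qgt : Term F ar V → Term F ar V → Prop)

mutual
  /-- The semantic path order induced by the order pair `(qge, qgt)` (`⊒∼`, `⊐`). -/
  inductive SPO : Term F ar V → Term F ar V → Prop where
    /-- (1) `s_i >_spo t`. -/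
    | sub {f ss t} (i : Fin (ar f)) : SPO (ss i) t → SPO (Term.app f ss) t
    /-- (1) `s_i = t`. -/
    | subEq {f ss t} (i : Fin (ar f)) : ss i = t → SPO (Term.app f ss) t
    /-- (2a) `s >_spo t_j` for all `j` and `s ⊐ t`. -/
    | gt {f ss g ts} : (∀ j, SPO (Term.app f ss) (ts j)) →
        qgt (Term.app f ss) (Term.app g ts) → SPO (Term.app f ss) (Term.app g ts)
    /-- (2b) `s >_spo t_j` for all `j`, `s ⊒∼ t` and lex comparison of arguments. -/
    | lex {f ss g ts} : (∀ j, SPO (Term.app f ss) (ts j)) →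
        qge (Term.app f ss) (Term.app g ts) →
        SPOLex (List.ofFn ss) (List.ofFn ts) → SPO (Term.app f ss) (Term.app g ts)

  /-- Lexicographic extension of `SPO` to argument lists. -/
  inductive SPOLex : List (Term F ar V) → List (Term F ar V) → Prop where
    | head {s t l₁ l₂} : SPO s t → SPOLex (s :: l₁) (t :: l₂)
    | tail {s l₁ l₂} : SPOLex l₁ l₂ → SPOLex (s :: l₁) (s :: l₂)
    | longer {s l₁} : SPOLex (s :: l₁) []
end

end SPO

section Props

variable {F V : Type} {ar : F → ℕ}

/-- Closure under contexts: replacing one argument. -/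
def ClosedCtx (R : Term F ar V → Term F ar V → Prop) : Prop :=
  ∀ (f : F) (args : Fin (ar f) → Term F ar V) (i : Fin (ar f)) (s t : Term F ar V),
    R s t → R (Term.app f (Function.update args i s)) (Term.app f (Function.update args i t))

/-- Closure under substitutions. -/
def ClosedSubst (R : Term F ar V → Term F ar V → Prop) : Prop :=
  ∀ (σ : V → Term F ar V) (s t : Term F ar V), R s t → R (s.subst σ) (t.subst σ)

/-- A reduction order: a well-founded strict order closed under contexts and substitutions. -/
def ReductionOrder (R : Term F ar V → Term F ar V → Prop) : Prop :=
  (∀ s, ¬ R s s) ∧ Transitive R ∧ WellFounded (fun s t => R t s) ∧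
    ClosedCtx R ∧ ClosedSubst R

/-- `Subterm t s` : `t` is a subterm of `s`. -/
inductive Subterm : Term F ar V → Term F ar V → Prop where
  | refl {t} : Subterm t t
  | arg {t f ss} (i : Fin (ar f)) : Subterm t (ss i) → Subterm t (Term.app f ss)

/-- `ProperSubterm t s` : `t` is a proper subterm of `s`. -/
def ProperSubterm (t s : Term F ar V) : Prop :=
  ∃ (f : F) (ss : Fin (ar f) → Term F ar V) (i : Fin (ar f)),
    s = Term.app f ss ∧ Subterm t (ss i)

/-- The rewrite relation of a TRS `R`: closure of the rules under substitutions and contexts. -/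
inductive Rewrite (R : Set (Term F ar V × Term F ar V)) : Term F ar V → Term F ar V → Prop where
  | rule {l r} (σ : V → Term F ar V) : (l, r) ∈ R → Rewrite R (l.subst σ) (r.subst σ)
  | ctx {s t} (f : F) (args : Fin (ar f) → Term F ar V) (i : Fin (ar f)) :
      Rewrite R s t →
      Rewrite R (Term.app f (Function.update args i s)) (Term.app f (Function.update args i t))

end Props

section Pair

variable {F V A : Type} (ar : F → ℕ) (I : (f : F) → (Fin (ar f) → A) → A)
  (lt : A → A → Prop) (prec : F → F → Prop)

/-- `s ⊒∼ t` : both non-variable, and `s >_A t`, or `s ≥_A t` and `root(s) ≿ root(t)`. -/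
def QGE (s t : Term F ar V) : Prop :=
  ∃ (f : F) (ss : Fin (ar f) → Term F ar V) (g : F) (ts : Fin (ar g) → Term F ar V),
    s = Term.app f ss ∧ t = Term.app g ts ∧
      (GTA ar I lt s t ∨ (GEA ar I lt s t ∧ prec f g))

/-- `s ⊐ t` : both non-variable, and `s >_A t`, or `s ≥_A t` and `root(s) ≻ root(t)`. -/
def QGT (s t : Term F ar V) : Prop :=
  ∃ (f : F) (ss : Fin (ar f) → Term F ar V) (g : F) (ts : Fin (ar g) → Term F ar V),
    s = Term.app f ss ∧ t = Term.app g ts ∧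
      (GTA ar I lt s t ∨ (GEA ar I lt s t ∧ prec f g ∧ ¬ prec g f))

variable (Im : (f : F) → (Fin (ar f) → A) → A)

/-- Interpretation of the marked term `t♯` (root symbol interpreted by `Im`). -/
def evalSharp (α : V → A) : Term F ar V → A
  | .var v => α v
  | .app f ts => Im f (fun i => (ts i).eval I α)

/-- `s♯ >_A t♯`. -/
def GTAS (s t : Term F ar V) : Prop :=
  ∀ α : V → A, lt (evalSharp ar I Im α t) (evalSharp ar I Im α s)

/-- `s♯ ≥_A t♯`. -/
def GEAS (s t : Term F ar V) : Prop :=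
  ∀ α : V → A, RC lt (evalSharp ar I Im α t) (evalSharp ar I Im α s)

/-- Marked version of `⊒∼` : `s♯ >_A t♯`, or `s♯ ≥_A t♯` and `root(s) ≿ root(t)`. -/
def QGES (s t : Term F ar V) : Prop :=
  ∃ (f : F) (ss : Fin (ar f) → Term F ar V) (g : F) (ts : Fin (ar g) → Term F ar V),
    s = Term.app f ss ∧ t = Term.app g ts ∧
      (GTAS ar I lt Im s t ∨ (GEAS ar I lt Im s t ∧ prec f g))

/-- Marked version of `⊐` : `s♯ >_A t♯`, or `s♯ ≥_A t♯` and `root(s) ≻ root(t)`. -/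
def QGTS (s t : Term F ar V) : Prop :=
  ∃ (f : F) (ss : Fin (ar f) → Term F ar V) (g : F) (ts : Fin (ar g) → Term F ar V),
    s = Term.app f ss ∧ t = Term.app g ts ∧
      (GTAS ar I lt Im s t ∨ (GEAS ar I lt Im s t ∧ prec f g ∧ ¬ prec g f))

/-- The generalized weighted path order: `s ≥_A t` and `s >_spo t` for the SPO induced
from the marked order pair. -/
def GWPO (s t : Term F ar V) : Prop :=
  GEA ar I lt s t ∧ SPO (QGES ar I lt prec Im) (QGTS ar I lt prec Im) s t

end Pair

/-- Signature `{f, g, h}` of unary symbols: `0 = f`, `1 = g`, `2 = h`. -/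
abbrev ar14 : Fin 3 → ℕ := fun _ => 1

/-- The variable `x`. -/
abbrev x14 : Term (Fin 3) ar14 ℕ := Term.var 0

/-- The TRS `{ f(g(x)) → g(f(f(x))), f(h(x)) → h(h(f(x))) }`. -/
abbrev R14 : Set (Term (Fin 3) ar14 ℕ × Term (Fin 3) ar14 ℕ) :=
  { (Term.app 0 (fun _ => Term.app 1 (fun _ => x14)),
     Term.app 1 (fun _ => Term.app 0 (fun _ => Term.app 0 (fun _ => x14)))),
    (Term.app 0 (fun _ => Term.app 2 (fun _ => x14)),
     Term.app 2 (fun _ => Term.app 2 (fun _ => Term.app 0 (fun _ => x14)))) }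

section Aux14

lemma eval_subst14 {F V A : Type} {ar : F → ℕ} (I : (f : F) → (Fin (ar f) → A) → A)
    (α : V → A) (σ : V → Term F ar V) (t : Term F ar V) :
    (t.subst σ).eval I α = t.eval I (fun v => (σ v).eval I α) := by
  induction t with
  | var v => rfl
  | app f args ih =>
    simp only [Term.subst, Term.eval]
    congr 1
    funext i
    exact ih i

/-- Interpretation computing `(#g, weight₁, weight₂)` where
`f ↦ (G, m₁ + 3^G, 3·m₂)`, `g ↦ (G+1, m₁, m₂)`, `h ↦ (G, m₁, m₂+1)`. -/
def I14 : (f : Fin 3) → (Fin (ar14 f) → ℕ × ℕ × ℕ) → ℕ × ℕ × ℕ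
  | 0, as => ((as 0).1, (as 0).2.1 + 3 ^ (as 0).1, 3 * (as 0).2.2)
  | 1, as => ((as 0).1 + 1, (as 0).2.1, (as 0).2.2)
  | 2, as => ((as 0).1, (as 0).2.1, (as 0).2.2 + 1)

/-- The measure: `g`-count, primary weight, secondary weight. -/
def meas14 (t : Term (Fin 3) ar14 ℕ) : ℕ × ℕ × ℕ := t.eval I14 (fun _ => (0, 0, 0))

lemma meas14_app (f : Fin 3) (args : Fin (ar14 f) → Term (Fin 3) ar14 ℕ) :
    meas14 (Term.app f args) = I14 f (fun i => meas14 (args i)) := rfl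

/-- Every rewrite step preserves the `g`-count and strictly decreases the weight pair
lexicographically. -/
lemma step14 {s t : Term (Fin 3) ar14 ℕ} (h : Rewrite R14 s t) :
    (meas14 s).1 = (meas14 t).1 ∧
      ((meas14 t).2.1 < (meas14 s).2.1 ∨
        ((meas14 t).2.1 = (meas14 s).2.1 ∧ (meas14 t).2.2 < (meas14 s).2.2)) := by
  induction h with
  | @rule l r σ mem =>
    simp only [R14, Set.mem_insert_iff, Set.mem_singleton_iff, Prod.mk.injEq] at mem
    have hσ := eval_subst14 I14 (fun _ => (0, 0, 0) : ℕ → ℕ × ℕ × ℕ) σ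
    have hpos : 0 < 3 ^ (Term.eval I14 (fun _ => (0, 0, 0)) (σ 0)).1 :=
      pow_pos (by norm_num) _
    rcases mem with ⟨hl, hr⟩ | ⟨hl, hr⟩ <;> subst hl <;> subst hr <;>
        unfold meas14 <;> rw [hσ, hσ] <;>
        simp only [Term.eval, I14, x14, pow_succ] <;>
        generalize (3 ^ (Term.eval I14 (fun _ => (0, 0, 0)) (σ 0)).1) = k at hpos ⊢
    · exact ⟨trivial, Or.inl (by omega)⟩
    · exact ⟨trivial, Or.inr ⟨trivial, by omega⟩⟩
  | @ctx s t f args i hst ih =>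
    have hargs : ∀ u : Term (Fin 3) ar14 ℕ, ∀ j : Fin (ar14 f),
        Function.update args i u j = u := by
      intro u j
      have : j = i := Subsingleton.elim j i
      rw [this, Function.update_self]
    rw [meas14_app, meas14_app]
    simp only [hargs]
    obtain ⟨h1, h2⟩ := ih
    match f with
    | 0 =>
      simp only [I14]
      refine ⟨by rw [h1], ?_⟩
      rcases h2 with h2 | ⟨h2, h3⟩
      · left; rw [h1]; omega
      · right; exact ⟨by rw [h1, h2], by omega⟩
    | 1 =>
      simp only [I14]
      exact ⟨by rw [h1], h2⟩
    | 2 =>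
      simp only [I14]
      refine ⟨by rw [h1], ?_⟩
      rcases h2 with h2 | ⟨h2, h3⟩
      · left; exact h2
      · right; exact ⟨h2, by omega⟩

end Aux14

/-- The TRS `{ f(g(x)) → g(f(f(x))), f(h(x)) → h(h(f(x))) }` is
terminating: its rewrite relation is well-founded. -/
theorem trs_fgh_terminating :
    WellFounded (fun s t : Term (Fin 3) ar14 ℕ => Rewrite R14 t s) := by
  have hwf : WellFounded (InvImage (Prod.Lex (· < ·) (· < ·))
      (fun t : Term (Fin 3) ar14 ℕ => ((meas14 t).2.1, (meas14 t).2.2))) :=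
    InvImage.wf _ ((IsWellFounded.wf : WellFounded ((· < ·) : ℕ → ℕ → Prop)).prod_lex
      (IsWellFounded.wf : WellFounded ((· < ·) : ℕ → ℕ → Prop)))
  refine Subrelation.wf (fun {s t} h => ?_) hwf
  obtain ⟨_, h2⟩ := step14 h
  show Prod.Lex (· < ·) (· < ·) ((meas14 s).2.1, (meas14 s).2.2)
    ((meas14 t).2.1, (meas14 t).2.2)
  rcases h2 with h2 | ⟨h2, h3⟩
  · exact Prod.Lex.left _ _ h2
  · rw [h2]; exact Prod.Lex.right _ h3
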